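/- arXiv:1603.01179 — 2 statements merged into one kernel-verified Lean document; each statement's English description precedes it below -/
import Mathlib

section
/- Let G₁ be the graph on vertex set {a,b,c,d,e,f,g,h} with edge set {ab, bc, cd, ce, ef, fd, cg, gh, hd}, and let H = G₁ − d be the induced subgraph on {a,b,c,e,f,g,h}. Then H is connected and is not 1-laminar: no diametral path of H is 1-dominating. Consequently G₁ is 1-laminar but is not a diametral path graph, so the class of diametral path graphs is strictly contained in the class of 1-laminar graphs. -/
open SimpleGraph

/-- A walk `p` is a diametral path: a shortest path between two vertices at distance `diam G`. -/
def IsDiametralPath {V : Type*} (G : SimpleGraph V) {u v : V} (p : G.Walk u v) : Prop :=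
  p.length = G.dist u v ∧ G.dist u v = G.diam

/-- A walk `p` is `k`-dominating: every vertex of `G` is at distance at most `k`
from some vertex of `p`. -/
def IsKDominating {V : Type*} (G : SimpleGraph V) (k : ℕ) {u v : V} (p : G.Walk u v) : Prop :=
  ∀ x : V, ∃ y ∈ p.support, G.dist x y ≤ k

/-- `G` is `k`-laminar: it has a `k`-dominating diametral path. -/
def KLaminar {V : Type*} (G : SimpleGraph V) (k : ℕ) : Prop :=
  ∃ (u v : V) (p : G.Walk u v), IsDiametralPath G p ∧ IsKDominating G k p

/-- `G` is a diametral path graph: every connected induced subgraph of `G` has a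
1-dominating diametral path, i.e. is 1-laminar. -/
def DiametralPathGraph {V : Type*} (G : SimpleGraph V) : Prop :=
  ∀ s : Set V, (G.induce s).Connected → KLaminar (G.induce s) 1

/-- The graph `G₁` on vertices `a, b, c, d, e, f, g, h` (encoded as `0, …, 7`) with edges
`ab, bc, cd, ce, ef, fd, cg, gh, hd`. -/
def G1 : SimpleGraph (Fin 8) :=
  SimpleGraph.fromRel (fun u v =>
    (u, v) ∈ [((0:Fin 8),(1:Fin 8)),(1,2),(2,3),(2,4),(4,5),(5,3),(2,6),(6,7),(7,3)])

/-!
Removing `d` from `G₁` leaves a spider: three legs `c–b–a`, `c–e–f`, `c–g–h` of length two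
glued at `c`. Its diameter is `4`, realised only between two leg ends, and a shortest path
between two leg ends stays on their two legs, so it misses the third leg end by distance `2`.
In `G₁` itself the path `a–b–c–d–f` has length `diam G₁ = 4` and every vertex is on it or
adjacent to it.
-/

namespace SimpleGraph

variable {V W : Type*} {G : SimpleGraph V} {G' : SimpleGraph W}

lemma Hom.edist_le (f : G →g G') (u v : V) : G'.edist (f u) (f v) ≤ G.edist u v := by
  by_cases huv : G.Reachable u v
  · obtain ⟨p, hp⟩ := huv.exists_walk_length_eq_edist
    rw [← hp, ← Walk.length_map f p]
    exact SimpleGraph.edist_le _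
  · rw [edist_eq_top_of_not_reachable huv]
    exact le_top

lemma Iso.edist_eq (φ : G ≃g G') (u v : V) : G'.edist (φ u) (φ v) = G.edist u v := by
  refine le_antisymm (Hom.edist_le φ.toHom u v) ?_
  simpa using Hom.edist_le φ.symm.toHom (φ u) (φ v)

lemma Iso.dist_eq (φ : G ≃g G') (u v : V) : G'.dist (φ u) (φ v) = G.dist u v :=
  congrArg ENat.toNat (φ.edist_eq u v)

lemma Iso.diam_eq (φ : G ≃g G') : G'.diam = G.diam := by
  have hediam : G'.ediam = G.ediam := by
    rw [ediam_eq_iSup_iSup_edist, ediam_eq_iSup_iSup_edist, ← φ.toEquiv.iSup_comp]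
    refine iSup_congr fun u => ?_
    rw [← φ.toEquiv.iSup_comp]
    exact iSup_congr fun v => φ.edist_eq u v
  exact congrArg ENat.toNat hediam

lemma dist_add_dist_le_length {u v y : V} (p : G.Walk u v) (hy : y ∈ p.support) :
    G.dist u y + G.dist y v ≤ p.length := by
  classical
  calc G.dist u y + G.dist y v
      ≤ (p.takeUntil y hy).length + (p.dropUntil y hy).length :=
        add_le_add (dist_le _) (dist_le _)
    _ = p.length := by rw [← Walk.length_append, p.take_spec hy]

lemma dist_eq_diam_iff [Finite V] (hG : G.Connected) {u v : V} :
    G.dist u v = G.diam ↔ ∀ x y, G.dist x y ≤ G.dist u v := by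
  have := hG.nonempty
  have hfin : G.ediam ≠ ⊤ := connected_iff_ediam_ne_top.mp hG
  refine ⟨fun h x y => h ▸ dist_le_diam hfin, fun h => le_antisymm (dist_le_diam hfin) ?_⟩
  obtain ⟨x, y, hxy⟩ := G.exists_dist_eq_diam
  exact hxy ▸ h x y

lemma le_add_length_of_le_succ_of_adj (f : V → ℕ) (hf : ∀ x y, G.Adj x y → f x ≤ f y + 1)
    {u v : V} (p : G.Walk u v) : f u ≤ f v + p.length := by
  induction p with
  | nil => simp
  | cons hxy _ ih =>
    have := hf _ _ hxy
    rw [Walk.length_cons]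
    omega

lemma exists_walk_length_le_of_exists_adj_lt (f : V → ℕ) {v : V}
    (hf : ∀ x, x ≠ v → ∃ y, G.Adj x y ∧ f y < f x) (u : V) :
    ∃ p : G.Walk u v, p.length ≤ f u := by
  induction hn : f u using Nat.strong_induction_on generalizing u with
  | _ n ih =>
    by_cases huv : u = v
    · subst huv
      exact ⟨.nil, Nat.zero_le _⟩
    obtain ⟨y, huy, hy⟩ := hf u huv
    obtain ⟨q, hq⟩ := ih (f y) (hn ▸ hy) y rfl
    exact ⟨.cons huy q, by rw [Walk.length_cons]; omega⟩

/-- Each `D · v` is `1`-Lipschitz along edges, which bounds distances to `v` from below, and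
decreases along some edge out of every `x ≠ v`, which bounds them from above. -/
structure IsDistTable (G : SimpleGraph V) (D : V → V → ℕ) : Prop where
  self_eq_zero : ∀ v, D v v = 0
  le_succ_of_adj : ∀ x y v, G.Adj x y → D x v ≤ D y v + 1
  exists_adj_lt : ∀ x v, x ≠ v → ∃ y, G.Adj x y ∧ D y v < D x v

namespace IsDistTable

variable {D : V → V → ℕ}

lemma dist_eq (hD : G.IsDistTable D) (u v : V) : G.dist u v = D u v := by
  obtain ⟨p, hp⟩ := exists_walk_length_le_of_exists_adj_lt (D · v) (hD.exists_adj_lt · v) u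
  obtain ⟨q, hq⟩ := p.reachable.exists_walk_length_eq_dist
  have hlow := le_add_length_of_le_succ_of_adj (D · v) (hD.le_succ_of_adj · · v) q
  have hvv := hD.self_eq_zero v
  have hup := dist_le p
  omega

lemma connected [Nonempty V] (hD : G.IsDistTable D) : G.Connected :=
  ⟨fun u v => (exists_walk_length_le_of_exists_adj_lt _ (hD.exists_adj_lt · v) u).elim
    fun p _ => p.reachable⟩

end IsDistTable

end SimpleGraph

open SimpleGraph

variable {V W : Type*} {G : SimpleGraph V}

lemma KLaminar.of_iso {G' : SimpleGraph W} {k : ℕ} (φ : G ≃g G') (h : KLaminar G k) :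
    KLaminar G' k := by
  obtain ⟨u, v, p, ⟨hlen, hdiam⟩, hdom⟩ := h
  refine ⟨φ u, φ v, p.map φ.toHom, ⟨?_, ?_⟩, fun x => ?_⟩
  · rw [Walk.length_map, φ.dist_eq, hlen]
  · rw [φ.dist_eq, φ.diam_eq, hdiam]
  · obtain ⟨y, hy, hxy⟩ := hdom (φ.symm x)
    refine ⟨φ y, by simpa using hy, ?_⟩
    simpa using (φ.dist_eq (φ.symm x) y).le.trans hxy

lemma DiametralPathGraph.kLaminar (h : DiametralPathGraph G) (hG : G.Connected) :
    KLaminar G 1 :=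
  (h Set.univ ((induceUnivIso G).connected_iff.mpr hG)).of_iso (induceUnivIso G)

lemma not_kLaminar_of_exists_far [Finite V] {k : ℕ} (hG : G.Connected)
    (h : ∀ u v, (∀ x y, G.dist x y ≤ G.dist u v) →
      ∃ x, ∀ y, G.dist u y + G.dist y v ≤ G.dist u v → k < G.dist x y) :
    ¬ KLaminar G k := by
  rintro ⟨u, v, p, ⟨hlen, hdiam⟩, hdom⟩
  obtain ⟨x, hfar⟩ := h u v ((dist_eq_diam_iff hG).mp hdiam)
  obtain ⟨y, hy, hxy⟩ := hdom x
  have := hfar y (hlen ▸ dist_add_dist_le_length p hy)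
  omega

instance : DecidableRel G1.Adj := fun u v => decidable_of_iff _ (fromRel_adj _ u v).symm

def distG1 : Fin 8 → Fin 8 → ℕ :=
  ![![0, 1, 2, 3, 3, 4, 3, 4],
    ![1, 0, 1, 2, 2, 3, 2, 3],
    ![2, 1, 0, 1, 1, 2, 1, 2],
    ![3, 2, 1, 0, 2, 1, 2, 1],
    ![3, 2, 1, 2, 0, 1, 2, 3],
    ![4, 3, 2, 1, 1, 0, 3, 2],
    ![3, 2, 1, 2, 2, 3, 0, 1],
    ![4, 3, 2, 1, 3, 2, 1, 0]]

lemma isDistTable_distG1 : G1.IsDistTable distG1 := ⟨by decide, by decide, by decide⟩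

abbrev G1MinusD : SimpleGraph {v : Fin 8 | v ≠ 3} := G1.induce {v : Fin 8 | v ≠ 3}

-- Row and column `3` (the deleted vertex `d`) are never read.
def distG1MinusD : Fin 8 → Fin 8 → ℕ :=
  ![![0, 1, 2, 0, 3, 4, 3, 4],
    ![1, 0, 1, 0, 2, 3, 2, 3],
    ![2, 1, 0, 0, 1, 2, 1, 2],
    ![0, 0, 0, 0, 0, 0, 0, 0],
    ![3, 2, 1, 0, 0, 1, 2, 3],
    ![4, 3, 2, 0, 1, 0, 3, 4],
    ![3, 2, 1, 0, 2, 3, 0, 1],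
    ![4, 3, 2, 0, 3, 4, 1, 0]]

lemma isDistTable_distG1MinusD :
    G1MinusD.IsDistTable (fun x y => distG1MinusD x y) :=
  ⟨by decide, by decide, by decide⟩

lemma G1MinusD_connected : G1MinusD.Connected :=
  have : Nonempty {v : Fin 8 | v ≠ 3} := ⟨⟨0, by decide⟩⟩
  isDistTable_distG1MinusD.connected

lemma G1MinusD_not_kLaminar : ¬ KLaminar G1MinusD 1 := by
  refine not_kLaminar_of_exists_far G1MinusD_connected ?_
  simp only [isDistTable_distG1MinusD.dist_eq]
  decide

def pathABCDF : G1.Walk 0 5 :=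
  .cons (show G1.Adj 0 1 by decide) <| .cons (show G1.Adj 1 2 by decide) <|
    .cons (show G1.Adj 2 3 by decide) <| .cons (show G1.Adj 3 5 by decide) .nil

lemma G1_kLaminar : KLaminar G1 1 := by
  refine ⟨0, 5, pathABCDF, ⟨?_, ?_⟩, ?_⟩
  · rw [isDistTable_distG1.dist_eq]
    rfl
  · rw [dist_eq_diam_iff isDistTable_distG1.connected]
    simp only [isDistTable_distG1.dist_eq]
    decide
  · unfold IsKDominating
    simp only [isDistTable_distG1.dist_eq]
    decide

/-- The induced subgraph `H = G₁ − d` on `{a, b, c, e, f, g, h}` is connected but not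
1-laminar.  Consequently `G₁` is 1-laminar but not a diametral path graph, while every
connected diametral path graph is 1-laminar: the class of diametral path graphs is strictly
contained in the class of 1-laminar graphs. -/
theorem diametralPathGraphs_strictly_contained_in_one_laminar :
    (G1.induce {v : Fin 8 | v ≠ 3}).Connected ∧
    ¬ KLaminar (G1.induce {v : Fin 8 | v ≠ 3}) 1 ∧
    KLaminar G1 1 ∧
    ¬ DiametralPathGraph G1 ∧
    (∀ {W : Type} (H : SimpleGraph W), H.Connected → DiametralPathGraph H → KLaminar H 1) :=
  ⟨G1MinusD_connected, G1MinusD_not_kLaminar, G1_kLaminar,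
    fun h => G1MinusD_not_kLaminar (h _ G1MinusD_connected),
    fun _ hH h => h.kLaminar hH⟩
end

section
/- For every 3SAT formula φ on n boolean variables (n even, n ≥ 4), the vertices V₁ and V_{2n} of G(φ) have eccentricity ecc(V₁) = ecc(V_{2n}) = 3n − 1 = diam(G(φ)). -/
open SimpleGraph

/-- Vertices of the graph `G(φ)` associated with a 3SAT formula `φ` with `m` clauses over `n`
boolean variables (`n` even):
* `lit i b` is the literal vertex `X_{i+1}` (if `b = true`) or `X̄_{i+1}` (if `b = false`);
* `chain k` is the vertex `V_{k+1}` of the two pending chains `V₁ — ⋯ — V_n` and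
  `V_{n+1} — ⋯ — V_{2n}`;
* `clause j` is the vertex of the clause `C_{j+1}`;
* `inner j t s` is the `(s+1)`-st internal vertex of the path of length `n/2 + 1` (with `n/2`
  internal vertices) joining the clause vertex `C_{j+1}` to the vertex of its `(t+1)`-st
  literal. -/
inductive Vert (n m : ℕ) : Type
  | lit : Fin n → Bool → Vert n m
  | chain : Fin (2 * n) → Vert n m
  | clause : Fin m → Vert n m
  | inner : Fin m → Fin 3 → Fin (n / 2) → Vert n m
  deriving DecidableEq

/-- The base (asymmetric) adjacency relation of `G(φ)`, where the 3SAT formula `φ` assigns to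
each clause index `j` and each slot `t ∈ {0,1,2}` a literal `φ j t = (i, b)` (variable index
`i`, polarity `b`):
* `X_i` and `X̄_i` are adjacent, and every vertex of `{X_i, X̄_i}` is adjacent to every vertex
  of `{X_{i+1}, X̄_{i+1}}`;
* `V₁ — ⋯ — V_n` and `V_{n+1} — ⋯ — V_{2n}` are paths, `V_n` is moreover adjacent to both
  `X₁, X̄₁` and `V_{n+1}` to both `X_n, X̄_n`;
* each clause vertex `C_j` is joined to the vertex of each of its literals by a path of length
  `n/2 + 1` whose `n/2` internal vertices are the `inner j t s`. -/
def satRel (n m : ℕ) (φ : Fin m → Fin 3 → Fin n × Bool) : Vert n m → Vert n m → Prop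
  | .lit i b, .lit i' b' => (i = i' ∧ b ≠ b') ∨ (i : ℕ) + 1 = (i' : ℕ)
  | .chain k, .chain k' => (k : ℕ) + 1 = (k' : ℕ) ∧ (k' : ℕ) ≠ n
  | .chain k, .lit i _ => ((k : ℕ) = n - 1 ∧ (i : ℕ) = 0) ∨ ((k : ℕ) = n ∧ (i : ℕ) = n - 1)
  | .clause j, .inner j' _ s => j = j' ∧ (s : ℕ) = 0
  | .inner j t s, .inner j' t' s' => j = j' ∧ t = t' ∧ (s : ℕ) + 1 = (s' : ℕ)
  | .inner j t s, .lit i b => (s : ℕ) = n / 2 - 1 ∧ φ j t = (i, b)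
  | _, _ => False

/-- The graph `G(φ)` associated with a 3SAT formula `φ`. -/
def Gphi (n m : ℕ) (φ : Fin m → Fin 3 → Fin n × Bool) : SimpleGraph (Vert n m) :=
  SimpleGraph.fromRel (satRel n m φ)

/-- The eccentricity of a vertex: the largest distance from `x` to any vertex. -/
noncomputable def ecc {V : Type*} (G : SimpleGraph V) (x : V) : ℕ :=
  sSup (Set.range (G.dist x))

/-! Every vertex is within distance `n` of some literal vertex (the chains have length `n`, the
clause paths `n / 2 + 1`), and two literal vertices are within distance `n - 1` along the
ladder `X₁ X̄₁ — ⋯ — X_n X̄_n`, so all distances are at most `3n - 1`. Conversely, `V₁` and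
`V_{2n}` are `3n - 1` apart: a potential that changes by at most one along every edge
takes the values `0` and `3n - 1` there, which shows that the clause gadgets offer no
shortcut. -/

namespace SimpleGraph

variable {V : Type*} {G : SimpleGraph V}

theorem exists_edist_le_of_descent (P : V → Prop) (h : V → ℕ)
    (hdesc : ∀ u, ¬ P u → ∃ w, G.Adj u w ∧ h w < h u) (u : V) :
    ∃ t, P t ∧ G.edist u t ≤ h u := by
  induction hu : h u using Nat.strong_induction_on generalizing u with
  | _ k ih =>
    by_cases hPu : P u
    · exact ⟨u, hPu, by simp⟩
    obtain ⟨w, huw, hw⟩ := hdesc u hPu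
    obtain ⟨t, hPt, hwt⟩ := ih (h w) (hu ▸ hw) w rfl
    refine ⟨t, hPt, ?_⟩
    calc G.edist u t ≤ G.edist u w + G.edist w t := G.edist_triangle
      _ ≤ 1 + h w := add_le_add (edist_eq_one_iff_adj.2 huw).le hwt
      _ ≤ k := by norm_cast; omega

theorem Walk.le_add_length_of_adj_le {f : V → ℕ} (hf : ∀ u v, G.Adj u v → f v ≤ f u + 1)
    {u v : V} (p : G.Walk u v) : f v ≤ f u + p.length := by
  induction p with
  | nil => simp
  | cons huw _ ih => have := hf _ _ huw; simp only [Walk.length_cons]; omega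

theorem le_add_edist_of_adj_le {f : V → ℕ} (hf : ∀ u v, G.Adj u v → f v ≤ f u + 1)
    (u v : V) : (f v : ℕ∞) ≤ f u + G.edist u v := by
  by_cases huv : G.Reachable u v
  · obtain ⟨p, hp⟩ := huv.exists_walk_length_eq_edist
    rw [← hp]
    exact_mod_cast p.le_add_length_of_adj_le hf
  · simp [edist_eq_top_of_not_reachable huv]

theorem diam_eq_of_edist_le {x y : V} {d : ℕ} (hle : ∀ u v, G.edist u v ≤ d)
    (hxy : G.edist x y = d) : G.diam = d := by
  have hediam : G.ediam = d := le_antisymm (ediam_le_of_edist_le hle) (hxy ▸ edist_le_ediam)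
  rw [diam, hediam, ENat.toNat_natCast]

end SimpleGraph

theorem ecc_eq_of_edist_le {V : Type*} {G : SimpleGraph V} {x y : V} {d : ℕ}
    (hle : ∀ v, G.edist x v ≤ d) (hy : G.edist x y = d) : ecc G x = d := by
  refine IsGreatest.csSup_eq ⟨⟨y, by simp [SimpleGraph.dist, hy]⟩, ?_⟩
  rintro _ ⟨v, rfl⟩
  exact ENat.toNat_le_of_le_natCast (hle v)

namespace Gphi

variable {n m : ℕ} {φ : Fin m → Fin 3 → Fin n × Bool}

theorem adj_of_satRel {a b : Vert n m} (hne : a ≠ b) (h : satRel n m φ a b) :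
    (Gphi n m φ).Adj a b :=
  (fromRel_adj _ _ _).2 ⟨hne, Or.inl h⟩

theorem edist_lit_le_of_lt {i i' : ℕ} (hi : i < n) (hi' : i' < n) (hii' : i < i')
    (b b' : Bool) :
    (Gphi n m φ).edist (.lit ⟨i, hi⟩ b) (.lit ⟨i', hi'⟩ b') ≤ (i' - i : ℕ) := by
  induction i' with
  | zero => omega
  | succ k ih =>
    have hadj : (Gphi n m φ).Adj (.lit ⟨k, by omega⟩ b') (.lit ⟨k + 1, hi'⟩ b') :=
      adj_of_satRel (by simp) (Or.inr rfl)
    rcases Nat.lt_or_ge i k with hik | hik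
    · calc (Gphi n m φ).edist (.lit ⟨i, hi⟩ b) (.lit ⟨k + 1, hi'⟩ b')
          ≤ (Gphi n m φ).edist (.lit ⟨i, hi⟩ b) (.lit ⟨k, by omega⟩ b') + 1 :=
            SimpleGraph.edist_triangle.trans (by rw [edist_eq_one_iff_adj.2 hadj])
        _ ≤ (k - i : ℕ) + 1 := add_le_add (ih (by omega) hik) le_rfl
        _ = (k + 1 - i : ℕ) := by norm_cast; omega
    · obtain rfl : i = k := by omega
      have hfirst : (Gphi n m φ).Adj (.lit ⟨i, hi⟩ b) (.lit ⟨i + 1, hi'⟩ b') :=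
        adj_of_satRel (by simp) (Or.inr rfl)
      simp [edist_eq_one_iff_adj.2 hfirst]

theorem edist_lit_le (hn : 2 ≤ n) (i i' : Fin n) (b b' : Bool) :
    (Gphi n m φ).edist (.lit i b) (.lit i' b') ≤ (n - 1 : ℕ) := by
  obtain ⟨i, hi⟩ := i
  obtain ⟨i', hi'⟩ := i'
  rcases lt_trichotomy i i' with hlt | rfl | hgt
  · exact (edist_lit_le_of_lt hi hi' hlt b b').trans
      (by exact_mod_cast (by omega : i' - i ≤ n - 1))
  · by_cases hb : b = b'
    · simp [hb]
    · have hadj : (Gphi n m φ).Adj (.lit ⟨i, hi⟩ b) (.lit ⟨i, hi⟩ b') :=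
        adj_of_satRel (by simp [hb]) (Or.inl ⟨rfl, hb⟩)
      rw [edist_eq_one_iff_adj.2 hadj]
      exact_mod_cast (by omega : 1 ≤ n - 1)
  · rw [SimpleGraph.edist_comm]
    exact (edist_lit_le_of_lt hi' hi hgt b' b).trans
      (by exact_mod_cast (by omega : i - i' ≤ n - 1))

def litDepth (n : ℕ) {m : ℕ} : Vert n m → ℕ
  | .lit _ _ => 0
  | .chain k => if (k : ℕ) < n then n - k else k + 1 - n
  | .clause _ => n / 2 + 1
  | .inner _ _ s => n / 2 - s

theorem litDepth_le (hn : 2 ≤ n) (u : Vert n m) : litDepth n u ≤ n := by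
  cases u with
  | chain k => have := k.isLt; simp only [litDepth]; split_ifs <;> omega
  | _ => simp only [litDepth]; omega

theorem exists_adj_litDepth_lt (hn : 2 ≤ n) (u : Vert n m) (hu : ¬ ∃ i b, u = .lit i b) :
    ∃ w, (Gphi n m φ).Adj u w ∧ litDepth n w < litDepth n u := by
  cases u with
  | lit i b => exact absurd ⟨i, b, rfl⟩ hu
  | chain k =>
    obtain ⟨k, hk⟩ := k
    rcases lt_trichotomy (k + 1) n with hlt | heq | hgt
    · refine ⟨.chain ⟨k + 1, by omega⟩, adj_of_satRel (by simp) ⟨rfl, by simp; omega⟩, ?_⟩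
      simp only [litDepth]; split_ifs <;> omega
    · refine ⟨.lit ⟨0, by omega⟩ true,
        adj_of_satRel (by simp) (Or.inl ⟨by simp; omega, rfl⟩), ?_⟩
      simp only [litDepth]; split_ifs <;> omega
    rcases eq_or_lt_of_le (Nat.le_of_lt_succ hgt) with heq | hgt
    · refine ⟨.lit ⟨n - 1, by omega⟩ true,
        adj_of_satRel (by simp) (Or.inr ⟨heq.symm, rfl⟩), ?_⟩
      simp only [litDepth]; split_ifs <;> omega
    · have hadj : (Gphi n m φ).Adj (.chain ⟨k - 1, by omega⟩) (.chain ⟨k, hk⟩) :=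
        adj_of_satRel (by simp; omega) ⟨by simp; omega, by simp; omega⟩
      refine ⟨_, hadj.symm, ?_⟩
      simp only [litDepth]; split_ifs <;> omega
  | clause j =>
    refine ⟨.inner j 0 ⟨0, by omega⟩, adj_of_satRel (by simp) ⟨rfl, rfl⟩, ?_⟩
    simp only [litDepth]; omega
  | inner j t s =>
    obtain ⟨s, hs⟩ := s
    by_cases hs' : s + 1 < n / 2
    · refine ⟨.inner j t ⟨s + 1, hs'⟩, adj_of_satRel (by simp) ⟨rfl, rfl, rfl⟩, ?_⟩
      simp only [litDepth]; omega
    · refine ⟨.lit (φ j t).1 (φ j t).2, adj_of_satRel (by simp) ⟨by simp only; omega, rfl⟩, ?_⟩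
      simp only [litDepth]; omega

theorem exists_edist_lit_le (hn : 2 ≤ n) (u : Vert n m) :
    ∃ i b, (Gphi n m φ).edist u (.lit i b) ≤ n := by
  obtain ⟨_, ⟨i, b, rfl⟩, hu⟩ :=
    exists_edist_le_of_descent _ _ (exists_adj_litDepth_lt (φ := φ) hn) u
  exact ⟨i, b, hu.trans (by exact_mod_cast litDepth_le hn u)⟩

theorem edist_le (hn : 2 ≤ n) (u v : Vert n m) :
    (Gphi n m φ).edist u v ≤ (3 * n - 1 : ℕ) := by
  obtain ⟨i, b, hu⟩ := exists_edist_lit_le (φ := φ) hn u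
  obtain ⟨i', b', hv⟩ := exists_edist_lit_le (φ := φ) hn v
  calc (Gphi n m φ).edist u v
      ≤ (Gphi n m φ).edist u (.lit i b) + (Gphi n m φ).edist (.lit i b) v :=
        SimpleGraph.edist_triangle
    _ ≤ (Gphi n m φ).edist u (.lit i b) + ((Gphi n m φ).edist (.lit i b) (.lit i' b')
        + (Gphi n m φ).edist (.lit i' b') v) := by gcongr; exact SimpleGraph.edist_triangle
    _ ≤ n + ((n - 1 : ℕ) + n) := by
        gcongr
        · exact edist_lit_le hn i i' b b'
        · rwa [SimpleGraph.edist_comm]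
    _ = (3 * n - 1 : ℕ) := by norm_cast; omega

/- On the chains and the literals this is the distance from `V₁`. Along each clause path it
interpolates between `n + n / 2` at the clause and `n + i` at the literal `X_i`; this stays
1-Lipschitz because the path has `n / 2 + 1` edges and `0 ≤ i < n`. -/
def potential (n : ℕ) {m : ℕ} (φ : Fin m → Fin 3 → Fin n × Bool) : Vert n m → ℕ
  | .lit i _ => n + i
  | .chain k => if (k : ℕ) < n then k else n + k
  | .clause _ => n + n / 2
  | .inner j t s => max (n + (φ j t).1 + s - n / 2) (n + n / 2 - 1 - s)

theorem potential_le_of_satRel {u v : Vert n m} (h : satRel n m φ u v) :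
    potential n φ u ≤ potential n φ v + 1 ∧ potential n φ v ≤ potential n φ u + 1 := by
  cases u <;> cases v <;> simp only [satRel] at h
  case lit.lit => simp only [potential]; omega
  case chain.lit k i _ => have := i.isLt; simp only [potential]; split_ifs <;> omega
  case chain.chain => simp only [potential]; split_ifs <;> omega
  case clause.inner j _ t _ =>
    obtain ⟨rfl, _⟩ := h
    have := (φ j t).1.isLt
    simp only [potential]; omega
  case inner.lit j t s _ _ =>
    obtain ⟨_, hφ⟩ := h
    have := s.isLt
    simp only [potential, hφ]; omega
  case inner.inner j t _ _ _ s' =>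
    obtain ⟨rfl, rfl, _⟩ := h
    have := s'.isLt; have := (φ j t).1.isLt
    simp only [potential]; omega

theorem potential_le_of_adj {u v : Vert n m} (h : (Gphi n m φ).Adj u v) :
    potential n φ v ≤ potential n φ u + 1 := by
  rcases ((fromRel_adj _ _ _).1 h).2 with h | h
  · exact (potential_le_of_satRel h).2
  · exact (potential_le_of_satRel h).1

theorem le_edist_chain_first_last (hn : 1 ≤ n) :
    (3 * n - 1 : ℕ) ≤
      (Gphi n m φ).edist (.chain ⟨0, by omega⟩) (.chain ⟨2 * n - 1, by omega⟩) := by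
  have := le_add_edist_of_adj_le (fun _ _ => potential_le_of_adj (φ := φ))
    (.chain ⟨0, by omega⟩) (.chain ⟨2 * n - 1, by omega⟩)
  simp only [potential, if_pos (by omega : 0 < n), if_neg (by omega : ¬ 2 * n - 1 < n),
    Nat.cast_zero, zero_add] at this
  rwa [show 3 * n - 1 = n + (2 * n - 1) by omega]

end Gphi

/-- For every 3SAT formula `φ` on `n` boolean variables (`n` even, `n ≥ 4`), the vertices `V₁`
and `V_{2n}` of `G(φ)` have eccentricity `ecc(V₁) = ecc(V_{2n}) = 3n − 1 = diam G(φ)`. -/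
theorem Gphi_ecc_endpoints (n m : ℕ) (h4 : 4 ≤ n)
    (φ : Fin m → Fin 3 → Fin n × Bool) :
    ecc (Gphi n m φ) (Vert.chain ⟨0, by omega⟩) = 3 * n - 1 ∧
    ecc (Gphi n m φ) (Vert.chain ⟨2 * n - 1, by omega⟩) = 3 * n - 1 ∧
    (Gphi n m φ).diam = 3 * n - 1 := by
  have hn : 2 ≤ n := by omega
  have hfar : (Gphi n m φ).edist (.chain ⟨0, by omega⟩) (.chain ⟨2 * n - 1, by omega⟩) =
      (3 * n - 1 : ℕ) :=
    le_antisymm (Gphi.edist_le hn _ _) (Gphi.le_edist_chain_first_last (by omega))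
  exact ⟨ecc_eq_of_edist_le (Gphi.edist_le hn _) hfar,
    ecc_eq_of_edist_le (Gphi.edist_le hn _) (by rw [SimpleGraph.edist_comm, hfar]),
    diam_eq_of_edist_le (Gphi.edist_le hn) hfar⟩
end
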